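/- Suppose (A,B) is uncontrollable, where A, B are as in the '1+n' mixed platoon. Then there exist λ ∈ ℂ and a nonzero vector ρ = (ρ₀₁,ρ₀₂,ρ₁₁,ρ₁₂,…,ρₙ₁,ρₙ₂) with ρᵀA = λρᵀ and ρᵀB = 0, and these conditions force ρ₀₂ = 0, (λ² + α₂λ + α₁)ρᵢ₁ = (α₃λ + α₁)ρ₍ᵢ₊₁₎₁ for i = 1,…,n-1, (α₃λ + α₁)ρ₁₁ = 0, and (λ² + α₂λ + α₁)ρₙ₁ = 0. -/

import Mathlib

def platoonA (α₁ α₂ α₃ : ℝ) (n : ℕ) : Matrix (Fin (2 * n + 2)) (Fin (2 * n + 2)) ℝ :=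
  Matrix.of fun i j =>
    if i.val = 0 ∧ j.val = 1 then 1
    else if 2 ≤ i.val ∧ i.val % 2 = 0 ∧ j.val = i.val + 1 then -1
    else if 2 ≤ i.val ∧ i.val % 2 = 0 ∧ j.val + 1 = i.val then 1
    else if 3 ≤ i.val ∧ i.val % 2 = 1 ∧ j.val + 1 = i.val then α₁
    else if 3 ≤ i.val ∧ i.val % 2 = 1 ∧ j.val = i.val then -α₂
    else if 3 ≤ i.val ∧ i.val % 2 = 1 ∧ j.val + 2 = i.val then α₃
    else 0

noncomputable def platoonAC (α₁ α₂ α₃ : ℝ) (n : ℕ) :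
    Matrix (Fin (2 * n + 2)) (Fin (2 * n + 2)) ℂ :=
  (platoonA α₁ α₂ α₃ n).map (fun x => (x : ℂ))

/-- Complexified input vector `B` (a `1` in the second entry). -/
def platoonBC (n : ℕ) : Fin (2 * n + 2) → ℂ := fun i => if i.val = 1 then 1 else 0

noncomputable def PBH (α₁ α₂ α₃ : ℝ) (n : ℕ) (l : ℂ) :
    Matrix (Fin (2 * n + 2)) (Fin (2 * n + 2 + 1)) ℂ :=
  Matrix.of fun i j =>
    if h : j.val < 2 * n + 2 then
      (l • (1 : Matrix (Fin (2 * n + 2)) (Fin (2 * n + 2)) ℂ)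
        - platoonAC α₁ α₂ α₃ n) i ⟨j.val, h⟩
    else if i.val = 1 then 1 else 0

/-!
A left null vector `ρ` of the PBH matrix `[λI - A, B]` is a left eigenvector of `A` with
`ρᵀB = ρ₀₂ = 0`. Extend `ρ` by zeros beyond index `2n + 1`, so that the last follower needs no
special treatment. Column `2i` of `ρᵀA = λρᵀ` reads `α₁ρᵢ₂ = λρᵢ₁`, and column `2i + 1` links
`ρᵢ₁, ρᵢ₂, ρ₍ᵢ₊₁₎₁, ρ₍ᵢ₊₁₎₂`; eliminating the `ρᵢ₂` gives the recurrence
`(λ² + α₂λ + α₁)ρᵢ₁ = (α₃λ + α₁)ρ₍ᵢ₊₁₎₁` for all `i ≥ 1`, whose instance `i = n` is the last claim.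
The leader's columns give `λρ₀₁ = 0` and `ρ₀₁ + ρ₁₁ + α₃ρ₁₂ = λρ₀₂ = 0`. If `λ ≠ 0` then `ρ₀₁ = 0`
and, with `α₁ρ₁₂ = λρ₁₁`, this yields `(α₃λ + α₁)ρ₁₁ = 0`; if `λ = 0` the recurrence says that
`α₁ρᵢ₁` does not depend on `i`, and it vanishes past the last follower.
-/

theorem Matrix.exists_vecMul_eq_zero_of_rank_ne {K m n : Type*} [Field K] [Fintype m]
    [Fintype n] (M : Matrix m n K) (h : M.rank ≠ Fintype.card m) : ∃ v ≠ 0, M.vecMul v = 0 := by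
  have hdep : ¬LinearIndependent K M.row := fun hind => h hind.rank_matrix
  obtain ⟨g, hg, i, hi⟩ := Fintype.not_linearIndependent_iff.mp hdep
  refine ⟨g, fun hg0 => hi (congrFun hg0 i), ?_⟩
  rw [Matrix.vecMul_eq_sum]
  exact hg

section ZeroExtend

variable {R : Type*} {N : ℕ}

def Fin.zeroExtend [Zero R] (ρ : Fin N → R) (m : ℕ) : R := if h : m < N then ρ ⟨m, h⟩ else 0

def Fin.indicatorAt [Zero R] (N m : ℕ) (x : R) : Fin N → R :=
  fun i => if (i : ℕ) = m then x else 0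

theorem Fin.zeroExtend_of_lt [Zero R] (ρ : Fin N → R) {m : ℕ} (h : m < N) :
    Fin.zeroExtend ρ m = ρ ⟨m, h⟩ := dif_pos h

theorem Fin.zeroExtend_of_le [Zero R] (ρ : Fin N → R) {m : ℕ} (h : N ≤ m) :
    Fin.zeroExtend ρ m = 0 := dif_neg h.not_gt

theorem Fin.dotProduct_indicatorAt [NonUnitalNonAssocSemiring R] (ρ : Fin N → R) (m : ℕ)
    (x : R) :
    ρ ⬝ᵥ Fin.indicatorAt N m x = Fin.zeroExtend ρ m * x := by
  unfold Fin.zeroExtend Fin.indicatorAt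
  split_ifs with h
  · simp only [dotProduct, mul_ite, mul_zero]
    rw [Finset.sum_eq_single_of_mem ⟨m, h⟩ (Finset.mem_univ _)] <;> simp +contextual [Fin.ext_iff]
  · rw [zero_mul]
    refine Fintype.sum_eq_zero _ fun i => ?_
    simp [show (i : ℕ) ≠ m by omega]

end ZeroExtend

section PlatoonColumns

open Matrix

variable (α₁ α₂ α₃ : ℝ) (n : ℕ) (j : Fin (2 * n + 2))

theorem platoonAC_transpose_apply_of_val_eq_zero (hj : (j : ℕ) = 0) :
    (platoonAC α₁ α₂ α₃ n)ᵀ j = 0 := by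
  funext i
  simp only [transpose_apply, platoonAC, platoonA, map_apply, of_apply]
  split_ifs <;> first | omega | simp

theorem platoonAC_transpose_apply_of_val_eq_one (hj : (j : ℕ) = 1) :
    (platoonAC α₁ α₂ α₃ n)ᵀ j =
      Fin.indicatorAt _ 0 1 + Fin.indicatorAt _ 2 1 + Fin.indicatorAt _ 3 (α₃ : ℂ) := by
  funext i
  simp only [transpose_apply, platoonAC, platoonA, map_apply, of_apply,
    Fin.indicatorAt, Pi.add_apply]
  split_ifs <;> first | omega | simp

theorem platoonAC_transpose_apply_of_val_eq_two_mul {k : ℕ} (hk : 1 ≤ k)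
    (hj : (j : ℕ) = 2 * k) :
    (platoonAC α₁ α₂ α₃ n)ᵀ j = Fin.indicatorAt _ (2 * k + 1) (α₁ : ℂ) := by
  funext i
  simp only [transpose_apply, platoonAC, platoonA, map_apply, of_apply,
    Fin.indicatorAt]
  split_ifs <;> first | omega | simp

theorem platoonAC_transpose_apply_of_val_eq_two_mul_add_one {k : ℕ} (hk : 1 ≤ k)
    (hj : (j : ℕ) = 2 * k + 1) :
    (platoonAC α₁ α₂ α₃ n)ᵀ j =
      Fin.indicatorAt _ (2 * k) (-1) + Fin.indicatorAt _ (2 * k + 1) (-(α₂ : ℂ)) +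
        Fin.indicatorAt _ (2 * k + 2) 1 + Fin.indicatorAt _ (2 * k + 3) (α₃ : ℂ) := by
  funext i
  simp only [transpose_apply, platoonAC, platoonA, map_apply, of_apply,
    Fin.indicatorAt, Pi.add_apply]
  split_ifs <;> first | omega | simp

end PlatoonColumns

section Recurrence

variable {R : Type*} [CommRing R] (r : ℕ → R) (l a₁ a₂ a₃ : R)

theorem platoon_recurrence
    (heven : ∀ k, 1 ≤ k → a₁ * r (2 * k + 1) = l * r (2 * k))
    (hodd : ∀ k, 1 ≤ k →
      -r (2 * k) - a₂ * r (2 * k + 1) + r (2 * k + 2) + a₃ * r (2 * k + 3) = l * r (2 * k + 1))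
    (k : ℕ) (hk : 1 ≤ k) :
    (l ^ 2 + a₂ * l + a₁) * r (2 * k) = (a₃ * l + a₁) * r (2 * k + 2) := by
  have hnext := heven (k + 1) (by omega)
  rw [show 2 * (k + 1) = 2 * k + 2 by ring, show 2 * k + 2 + 1 = 2 * k + 3 by ring] at hnext
  linear_combination (-(a₂ + l)) * heven k hk + a₃ * hnext - a₁ * hodd k hk

theorem platoon_recurrence_head_eq_zero [NoZeroDivisors R] {n : ℕ}
    (h0 : l * r 0 = 0) (h1 : r 0 + r 2 + a₃ * r 3 = l * r 1) (hr1 : r 1 = 0)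
    (heven : a₁ * r 3 = l * r 2)
    (hrec : ∀ k, 1 ≤ k → (l ^ 2 + a₂ * l + a₁) * r (2 * k) = (a₃ * l + a₁) * r (2 * k + 2))
    (hlast : r (2 * n + 2) = 0) :
    (a₃ * l + a₁) * r 2 = 0 := by
  by_cases hl : l = 0
  · subst hl
    have hconst : ∀ m, a₁ * r 2 = a₁ * r (2 * m + 2) := by
      intro m
      induction m with
      | zero => rfl
      | succ m ih =>
        have := hrec (m + 1) (by omega)
        rw [show 2 * (m + 1) = 2 * m + 2 by ring] at this
        linear_combination ih + this
    linear_combination hconst n + a₁ * hlast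
  · have hr0 : r 0 = 0 := (mul_eq_zero.mp h0).resolve_left hl
    linear_combination a₁ * h1 - a₃ * heven + a₁ * l * hr1 - a₁ * hr0

end Recurrence

section LeftEigenvector

open Matrix

variable {α₁ α₂ α₃ : ℝ} {n : ℕ} {l : ℂ} {ρ : Fin (2 * n + 2) → ℂ}

theorem vecMul_platoonAC_eq_smul_of_vecMul_PBH_eq_zero (h : ρ ᵥ* PBH α₁ α₂ α₃ n l = 0) :
    ρ ᵥ* platoonAC α₁ α₂ α₃ n = l • ρ := by
  have hsub : ρ ᵥ* (l • 1 - platoonAC α₁ α₂ α₃ n) = 0 := funext fun j => by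
    have hj := congrFun h j.castSucc
    simp only [vecMul, PBH, of_apply, Fin.val_castSucc, j.isLt, dite_true] at hj
    exact hj
  rw [vecMul_sub, sub_eq_zero, vecMul_smul, vecMul_one] at hsub
  exact hsub.symm

theorem dotProduct_platoonBC_eq_zero_of_vecMul_PBH_eq_zero (h : ρ ᵥ* PBH α₁ α₂ α₃ n l = 0) :
    ρ ⬝ᵥ platoonBC n = 0 := by
  have hB := congrFun h (Fin.last _)
  simp only [vecMul, PBH, of_apply, Fin.val_last, lt_irrefl, dite_false] at hB
  exact hB

theorem dotProduct_platoonBC : ρ ⬝ᵥ platoonBC n = Fin.zeroExtend ρ 1 :=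
  (Fin.dotProduct_indicatorAt ρ 1 1).trans (mul_one _)

theorem dotProduct_platoonAC_transpose (hρ : ρ ᵥ* platoonAC α₁ α₂ α₃ n = l • ρ) {m : ℕ}
    (hm : m < 2 * n + 2) :
    ρ ⬝ᵥ (platoonAC α₁ α₂ α₃ n)ᵀ ⟨m, hm⟩ = l * Fin.zeroExtend ρ m := by
  rw [Fin.zeroExtend_of_lt ρ hm]
  exact congrFun hρ _

theorem platoon_left_eigen_col_zero (hρ : ρ ᵥ* platoonAC α₁ α₂ α₃ n = l • ρ) :
    l * Fin.zeroExtend ρ 0 = 0 := by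
  have h := dotProduct_platoonAC_transpose hρ (m := 0) (by omega)
  rwa [platoonAC_transpose_apply_of_val_eq_zero _ _ _ _ _ rfl, dotProduct_zero, eq_comm] at h

theorem platoon_left_eigen_col_one (hρ : ρ ᵥ* platoonAC α₁ α₂ α₃ n = l • ρ) :
    Fin.zeroExtend ρ 0 + Fin.zeroExtend ρ 2 + α₃ * Fin.zeroExtend ρ 3 =
      l * Fin.zeroExtend ρ 1 := by
  have h := dotProduct_platoonAC_transpose hρ (m := 1) (by omega)
  rw [platoonAC_transpose_apply_of_val_eq_one _ _ _ _ _ rfl] at h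
  simpa only [dotProduct_add, Fin.dotProduct_indicatorAt, mul_one, mul_comm, one_mul] using h

theorem platoon_left_eigen_col_even (hρ : ρ ᵥ* platoonAC α₁ α₂ α₃ n = l • ρ) {k : ℕ}
    (hk : 1 ≤ k) :
    α₁ * Fin.zeroExtend ρ (2 * k + 1) = l * Fin.zeroExtend ρ (2 * k) := by
  by_cases hkn : k ≤ n
  · have h := dotProduct_platoonAC_transpose hρ (m := 2 * k) (by omega)
    rw [platoonAC_transpose_apply_of_val_eq_two_mul _ _ _ _ _ hk rfl] at h
    simpa only [Fin.dotProduct_indicatorAt, mul_comm] using h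
  · simp [Fin.zeroExtend_of_le ρ (show 2 * n + 2 ≤ 2 * k by omega),
      Fin.zeroExtend_of_le ρ (show 2 * n + 2 ≤ 2 * k + 1 by omega)]

theorem platoon_left_eigen_col_odd (hρ : ρ ᵥ* platoonAC α₁ α₂ α₃ n = l • ρ) {k : ℕ}
    (hk : 1 ≤ k) :
    -Fin.zeroExtend ρ (2 * k) - α₂ * Fin.zeroExtend ρ (2 * k + 1) + Fin.zeroExtend ρ (2 * k + 2)
      + α₃ * Fin.zeroExtend ρ (2 * k + 3) = l * Fin.zeroExtend ρ (2 * k + 1) := by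
  by_cases hkn : k ≤ n
  · have h := dotProduct_platoonAC_transpose hρ (m := 2 * k + 1) (by omega)
    rw [platoonAC_transpose_apply_of_val_eq_two_mul_add_one _ _ _ _ _ hk rfl] at h
    simp only [dotProduct_add, Fin.dotProduct_indicatorAt] at h
    linear_combination h
  · simp [Fin.zeroExtend_of_le ρ (show 2 * n + 2 ≤ 2 * k by omega),
      Fin.zeroExtend_of_le ρ (show 2 * n + 2 ≤ 2 * k + 1 by omega),
      Fin.zeroExtend_of_le ρ (show 2 * n + 2 ≤ 2 * k + 2 by omega),
      Fin.zeroExtend_of_le ρ (show 2 * n + 2 ≤ 2 * k + 3 by omega)]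

end LeftEigenvector

/-- If the `1+n` platoon pair `(A, B)` is uncontrollable (PBH rank test fails for
some eigenvalue), then there is a nonzero left eigenvector `ρ` with `ρᵀA = λρᵀ`,
`ρᵀB = 0`, and these conditions force `ρ₀₂ = 0`,
`(λ² + α₂λ + α₁)ρᵢ₁ = (α₃λ + α₁)ρ₍ᵢ₊₁₎₁` for `i = 1,…,n-1`,
`(α₃λ + α₁)ρ₁₁ = 0`, and `(λ² + α₂λ + α₁)ρₙ₁ = 0`.
Here `ρ₀₁ = ρ 0`, `ρ₀₂ = ρ 1`, and `ρᵢ₁ = ρ (2i)`, `ρᵢ₂ = ρ (2i+1)`. -/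
theorem platoon_uncontrollable_left_eigenvector (α₁ α₂ α₃ : ℝ) (n : ℕ) (hn : 1 ≤ n)
    (hunc : ¬ (∀ l : ℂ, l ∈ spectrum ℂ (platoonAC α₁ α₂ α₃ n) →
      (PBH α₁ α₂ α₃ n l).rank = 2 * n + 2)) :
    ∃ (l : ℂ) (ρ : Fin (2 * n + 2) → ℂ), ρ ≠ 0 ∧
      Matrix.vecMul ρ (platoonAC α₁ α₂ α₃ n) = l • ρ ∧
      dotProduct ρ (platoonBC n) = 0 ∧
      ρ 1 = 0 ∧
      (∀ i : ℕ, 1 ≤ i → i + 1 ≤ n → ∀ (h2i : 2 * i < 2 * n + 2) (h2i2 : 2 * i + 2 < 2 * n + 2),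
        (l ^ 2 + (α₂ : ℂ) * l + (α₁ : ℂ)) * ρ ⟨2 * i, h2i⟩ =
          ((α₃ : ℂ) * l + (α₁ : ℂ)) * ρ ⟨2 * i + 2, h2i2⟩) ∧
      (∀ h2 : 2 < 2 * n + 2, ((α₃ : ℂ) * l + (α₁ : ℂ)) * ρ ⟨2, h2⟩ = 0) ∧
      (∀ h2n : 2 * n < 2 * n + 2,
        (l ^ 2 + (α₂ : ℂ) * l + (α₁ : ℂ)) * ρ ⟨2 * n, h2n⟩ = 0) := by
  obtain ⟨l, -, hrank⟩ : ∃ l ∈ spectrum ℂ (platoonAC α₁ α₂ α₃ n),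
      (PBH α₁ α₂ α₃ n l).rank ≠ 2 * n + 2 := by
    simpa only [not_forall, exists_prop] using hunc
  obtain ⟨ρ, hρ0, hker⟩ :=
    (PBH α₁ α₂ α₃ n l).exists_vecMul_eq_zero_of_rank_ne (by simpa using hrank)
  have hρ := vecMul_platoonAC_eq_smul_of_vecMul_PBH_eq_zero hker
  have hB := dotProduct_platoonBC_eq_zero_of_vecMul_PBH_eq_zero hker
  set r := Fin.zeroExtend ρ
  have hr1 : r 1 = 0 := dotProduct_platoonBC.symm.trans hB
  have hlast : r (2 * n + 2) = 0 := Fin.zeroExtend_of_le ρ le_rfl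
  have hrec := platoon_recurrence r l α₁ α₂ α₃ (fun _ hk => platoon_left_eigen_col_even hρ hk)
    (fun _ hk => platoon_left_eigen_col_odd hρ hk)
  refine ⟨l, ρ, hρ0, hρ, hB, ?_, ?_, ?_, ?_⟩
  · rw [show (1 : Fin (2 * n + 2)) = ⟨1, by omega⟩ from Fin.ext (Fin.val_one _),
      ← Fin.zeroExtend_of_lt ρ]
    exact hr1
  · intro i hi _ h2i h2i2
    rw [← Fin.zeroExtend_of_lt ρ h2i, ← Fin.zeroExtend_of_lt ρ h2i2]
    exact hrec i hi
  · intro h2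
    rw [← Fin.zeroExtend_of_lt ρ h2]
    exact platoon_recurrence_head_eq_zero r l α₁ α₂ α₃ (platoon_left_eigen_col_zero hρ)
      (platoon_left_eigen_col_one hρ) hr1 (platoon_left_eigen_col_even hρ le_rfl) hrec hlast
  · intro h2n
    simpa [← Fin.zeroExtend_of_lt ρ h2n, hlast] using hrec n hn
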